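/- Let U ⊆ ℝ² be open and let u : U → ℝ be a smooth solution of the Hunter–Saxton equation u_{tx} + u·u_{xx} + (1/2)u_x² = 0 on U. Define K(t,x) := u_{tt}(t,x) − u(t,x)²·u_{xx}(t,x) + u_t(t,x)·u_x(t,x). Then ∂K/∂x = 0 everywhere on U; i.e., the differential invariant K = u_{tt} − u²u_{xx} + u_t u_x is constant in x along every solution (the syzygy ∂̂_J(K) = 0 of the quotient with respect to the three-dimensional symmetry algebra spanned by ∂_x, t∂_x + ∂_u, t²∂_x + 2t∂_u). -/

import Mathlib

open Real

/-- Partial derivative of a function of two real variables w.r.t. its first argument. -/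
noncomputable def d1 (f : ℝ → ℝ → ℝ) (a b : ℝ) : ℝ := deriv (fun s => f s b) a

/-- Partial derivative of a function of two real variables w.r.t. its second argument. -/
noncomputable def d2 (f : ℝ → ℝ → ℝ) (a b : ℝ) : ℝ := deriv (fun s => f a s) b

/-- A function of two real variables is smooth (infinitely differentiable). -/
def Smooth2 (f : ℝ → ℝ → ℝ) : Prop := ContDiff ℝ (⊤ : ℕ∞) (fun p : ℝ × ℝ => f p.1 p.2)

/-- A function of two real variables is smooth on a set `U ⊆ ℝ²`. -/
def Smooth2On (f : ℝ → ℝ → ℝ) (U : Set (ℝ × ℝ)) : Prop :=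
  ContDiffOn ℝ (⊤ : ℕ∞) (fun p : ℝ × ℝ => f p.1 p.2) U

/-!
Writing `E = u_tx + u u_xx + u_x²/2` for the left-hand side of the equation, a direct computation
gives `K_x = E_t − u E_x` once mixed third partials are identified (Schwarz). Since `E` vanishes
on the open set `U`, so do `E_t` and `E_x`, hence `K_x = 0` on `U`.
-/

open Function Filter Topology

section Partials

variable {f g : ℝ → ℝ → ℝ} {t x : ℝ}

theorem hasDerivAt_d1_fderiv (h : DifferentiableAt ℝ (uncurry f) (t, x)) :
    HasDerivAt (fun s => f s x) (fderiv ℝ (uncurry f) (t, x) (1, 0)) t :=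
  h.hasFDerivAt.comp_hasDerivAt (f := fun s => (s, x)) t
    ((hasDerivAt_id t).prodMk (hasDerivAt_const t x))

theorem hasDerivAt_d2_fderiv (h : DifferentiableAt ℝ (uncurry f) (t, x)) :
    HasDerivAt (fun s => f t s) (fderiv ℝ (uncurry f) (t, x) (0, 1)) x :=
  h.hasFDerivAt.comp_hasDerivAt (f := fun s => (t, s)) x
    ((hasDerivAt_const x t).prodMk (hasDerivAt_id x))

theorem d1_eq_fderiv (h : DifferentiableAt ℝ (uncurry f) (t, x)) :
    d1 f t x = fderiv ℝ (uncurry f) (t, x) (1, 0) :=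
  (hasDerivAt_d1_fderiv h).deriv

theorem d2_eq_fderiv (h : DifferentiableAt ℝ (uncurry f) (t, x)) :
    d2 f t x = fderiv ℝ (uncurry f) (t, x) (0, 1) :=
  (hasDerivAt_d2_fderiv h).deriv

theorem hasDerivAt_d1 (h : DifferentiableAt ℝ (uncurry f) (t, x)) :
    HasDerivAt (fun s => f s x) (d1 f t x) t :=
  d1_eq_fderiv h ▸ hasDerivAt_d1_fderiv h

theorem hasDerivAt_d2 (h : DifferentiableAt ℝ (uncurry f) (t, x)) :
    HasDerivAt (fun s => f t s) (d2 f t x) x :=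
  d2_eq_fderiv h ▸ hasDerivAt_d2_fderiv h

variable {U : Set (ℝ × ℝ)}

theorem d1_congr (hU : IsOpen U) (h : ∀ q ∈ U, f q.1 q.2 = g q.1 q.2) (hp : (t, x) ∈ U) :
    d1 f t x = d1 g t x := by
  have hslice : {s : ℝ | (s, x) ∈ U} ∈ 𝓝 t :=
    (hU.preimage (by fun_prop)).mem_nhds hp
  exact EventuallyEq.deriv_eq (mem_of_superset hslice fun s hs => h (s, x) hs)

theorem d2_congr (hU : IsOpen U) (h : ∀ q ∈ U, f q.1 q.2 = g q.1 q.2) (hp : (t, x) ∈ U) :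
    d2 f t x = d2 g t x := by
  have hslice : {s : ℝ | (t, s) ∈ U} ∈ 𝓝 x :=
    (hU.preimage (by fun_prop)).mem_nhds hp
  exact EventuallyEq.deriv_eq (mem_of_superset hslice fun s hs => h (t, s) hs)

theorem Smooth2On.differentiableAt (hf : Smooth2On f U) (hU : IsOpen U) {p : ℝ × ℝ} (hp : p ∈ U) :
    DifferentiableAt ℝ (uncurry f) p :=
  (hf.contDiffAt (hU.mem_nhds hp)).differentiableAt (by simp)

theorem smooth2On_d1 (hf : Smooth2On f U) (hU : IsOpen U) : Smooth2On (d1 f) U :=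
  ((ContinuousLinearMap.apply ℝ ℝ ((1 : ℝ), (0 : ℝ))).contDiff.comp_contDiffOn
    (hf.fderiv_of_isOpen hU (m := (⊤ : ℕ∞)) (by simp))).congr
    fun _ hq => d1_eq_fderiv (hf.differentiableAt hU hq)

theorem smooth2On_d2 (hf : Smooth2On f U) (hU : IsOpen U) : Smooth2On (d2 f) U :=
  ((ContinuousLinearMap.apply ℝ ℝ ((0 : ℝ), (1 : ℝ))).contDiff.comp_contDiffOn
    (hf.fderiv_of_isOpen hU (m := (⊤ : ℕ∞)) (by simp))).congr
    fun _ hq => d2_eq_fderiv (hf.differentiableAt hU hq)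

theorem Smooth2On.differentiableAt_fderiv (hf : Smooth2On f U) (hU : IsOpen U) {p : ℝ × ℝ}
    (hp : p ∈ U) : DifferentiableAt ℝ (fderiv ℝ (uncurry f)) p :=
  ((hf.contDiffAt (hU.mem_nhds hp)).fderiv_right (m := 1)
    (WithTop.coe_le_coe.mpr le_top)).differentiableAt one_ne_zero

theorem Smooth2On.fderiv_uncurry_d1 (hf : Smooth2On f U) (hU : IsOpen U) {p : ℝ × ℝ}
    (hp : p ∈ U) (v : ℝ × ℝ) :
    fderiv ℝ (uncurry (d1 f)) p v = fderiv ℝ (fderiv ℝ (uncurry f)) p v (1, 0) := by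
  have hd1 : uncurry (d1 f) =ᶠ[𝓝 p] fun q => fderiv ℝ (uncurry f) q (1, 0) :=
    mem_of_superset (hU.mem_nhds hp) fun q hq => d1_eq_fderiv (hf.differentiableAt hU hq)
  rw [hd1.fderiv_eq, fderiv_clm_apply (hf.differentiableAt_fderiv hU hp) (differentiableAt_const _)]
  simp

theorem Smooth2On.fderiv_uncurry_d2 (hf : Smooth2On f U) (hU : IsOpen U) {p : ℝ × ℝ}
    (hp : p ∈ U) (v : ℝ × ℝ) :
    fderiv ℝ (uncurry (d2 f)) p v = fderiv ℝ (fderiv ℝ (uncurry f)) p v (0, 1) := by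
  have hd2 : uncurry (d2 f) =ᶠ[𝓝 p] fun q => fderiv ℝ (uncurry f) q (0, 1) :=
    mem_of_superset (hU.mem_nhds hp) fun q hq => d2_eq_fderiv (hf.differentiableAt hU hq)
  rw [hd2.fderiv_eq, fderiv_clm_apply (hf.differentiableAt_fderiv hU hp) (differentiableAt_const _)]
  simp

theorem Smooth2On.d1_d2_comm (hf : Smooth2On f U) (hU : IsOpen U) (hp : (t, x) ∈ U) :
    d1 (d2 f) t x = d2 (d1 f) t x := by
  have hsymm : IsSymmSndFDerivAt ℝ (uncurry f) (t, x) :=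
    (hf.contDiffAt (hU.mem_nhds hp)).isSymmSndFDerivAt (by
      rw [minSmoothness_of_isRCLikeNormedField]; exact WithTop.coe_le_coe.mpr le_top)
  rw [d1_eq_fderiv ((smooth2On_d2 hf hU).differentiableAt hU hp),
    d2_eq_fderiv ((smooth2On_d1 hf hU).differentiableAt hU hp),
    hf.fderiv_uncurry_d2 hU hp, hf.fderiv_uncurry_d1 hU hp, hsymm.eq]

end Partials

noncomputable def hunterSaxtonLHS (u : ℝ → ℝ → ℝ) (t x : ℝ) : ℝ :=
  d1 (d2 u) t x + u t x * d2 (d2 u) t x + (1/2) * (d2 u t x)^2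

noncomputable def hunterSaxtonK (u : ℝ → ℝ → ℝ) (t x : ℝ) : ℝ :=
  d1 (d1 u) t x - (u t x)^2 * d2 (d2 u) t x + d1 u t x * d2 u t x

theorem d2_hunterSaxtonK {U : Set (ℝ × ℝ)} (hU : IsOpen U) {u : ℝ → ℝ → ℝ} (hu : Smooth2On u U)
    {t x : ℝ} (hp : (t, x) ∈ U) :
    d2 (hunterSaxtonK u) t x =
      d1 (hunterSaxtonLHS u) t x - u t x * d2 (hunterSaxtonLHS u) t x := by
  have hu_t := smooth2On_d1 hu hU
  have hu_x := smooth2On_d2 hu hU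
  have hu_tt := smooth2On_d1 hu_t hU
  have hu_tx := smooth2On_d1 hu_x hU
  have hu_xx := smooth2On_d2 hu_x hU
  have hK : d2 (hunterSaxtonK u) t x = _ :=
    ((hasDerivAt_d2 (hu_tt.differentiableAt hU hp)).fun_sub
      (((hasDerivAt_d2 (hu.differentiableAt hU hp)).fun_pow 2).fun_mul
        (hasDerivAt_d2 (hu_xx.differentiableAt hU hp)))).fun_add
      ((hasDerivAt_d2 (hu_t.differentiableAt hU hp)).fun_mul
        (hasDerivAt_d2 (hu_x.differentiableAt hU hp))) |>.deriv
  have hE₁ : d1 (hunterSaxtonLHS u) t x = _ :=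
    (((hasDerivAt_d1 (hu_tx.differentiableAt hU hp)).fun_add
      ((hasDerivAt_d1 (hu.differentiableAt hU hp)).fun_mul
        (hasDerivAt_d1 (hu_xx.differentiableAt hU hp)))).fun_add
      (((hasDerivAt_d1 (hu_x.differentiableAt hU hp)).fun_pow 2).const_mul (1/2 : ℝ))).deriv
  have hE₂ : d2 (hunterSaxtonLHS u) t x = _ :=
    (((hasDerivAt_d2 (hu_tx.differentiableAt hU hp)).fun_add
      ((hasDerivAt_d2 (hu.differentiableAt hU hp)).fun_mul
        (hasDerivAt_d2 (hu_xx.differentiableAt hU hp)))).fun_add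
      (((hasDerivAt_d2 (hu_x.differentiableAt hU hp)).fun_pow 2).const_mul (1/2 : ℝ))).deriv
  have h_tx : d2 (d1 u) t x = d1 (d2 u) t x := (hu.d1_d2_comm hU hp).symm
  have h_ttx : d2 (d1 (d1 u)) t x = d1 (d1 (d2 u)) t x :=
    (hu_t.d1_d2_comm hU hp).symm.trans
      (d1_congr hU (fun q hq => (hu.d1_d2_comm hU hq).symm) hp)
  have h_txx : d1 (d2 (d2 u)) t x = d2 (d1 (d2 u)) t x := hu_x.d1_d2_comm hU hp
  rw [hK, hE₁, hE₂]
  linear_combination h_ttx + d2 u t x * h_tx - u t x * h_txx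

/-- Along any smooth solution of the Hunter–Saxton equation, the differential invariant
`K = u_{tt} − u²u_{xx} + u_t u_x` is constant in `x`: the syzygy `∂̂_J(K) = 0`. -/
theorem hunterSaxton_invariant_K_constant_in_x
    (U : Set (ℝ × ℝ)) (hU : IsOpen U)
    (u : ℝ → ℝ → ℝ) (hu : Smooth2On u U)
    (hsol : ∀ p ∈ U,
      d1 (d2 u) p.1 p.2 + u p.1 p.2 * d2 (d2 u) p.1 p.2 + (1/2) * (d2 u p.1 p.2)^2 = 0)
    (K : ℝ → ℝ → ℝ)
    (hK : ∀ t x : ℝ,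
      K t x = d1 (d1 u) t x - (u t x)^2 * d2 (d2 u) t x + d1 u t x * d2 u t x) :
    ∀ p ∈ U, d2 K p.1 p.2 = 0 := by
  obtain rfl : K = hunterSaxtonK u := funext₂ hK
  rintro ⟨t, x⟩ hp
  rw [d2_hunterSaxtonK hU hu hp, d1_congr (g := fun _ _ => 0) hU hsol hp,
    d2_congr (g := fun _ _ => 0) hU hsol hp]
  simp [d1, d2]
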